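/- arXiv:2206.07412 — 2 statements merged into one kernel-verified Lean document; each statement's English description precedes it below -/
import Mathlib

section
/- Every composite of the generators R_{a,b} and their generalised inverses is monotone: if f is a partial injection on ℕ obtained by composing maps of the forms n ↦ an + b and their partial inverses, then whenever f(x) and f(y) are both defined, x ≤ y iff f(x) ≤ f(y). -/
def pcomp (f g : ℕ → Option ℕ) : ℕ → Option ℕ := fun n => (g n).bind f

def Rgen (a b : ℕ) : ℕ → Option ℕ := fun n => if n % a = b then some ((n - b) / a) else none

def Rdag (a b : ℕ) : ℕ → Option ℕ := fun n => some (a * n + b)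

/-! Each generator is monotone on its domain: `n ↦ a n + b` is strictly increasing when `a > 0`,
and on the residue class `b mod a` the map `n ↦ (n - b) / a` is `n ↦ n / a`, which reflects `≤`
because two numbers with the same remainder compare like their quotients. Monotone partial
injections are closed under composition, so induction on the word finishes the proof. -/

def MonotonePInj {α β : Type*} [Preorder α] [Preorder β] (f : α → Option β) : Prop :=
  ∀ x y u v, f x = some u → f y = some v → (x ≤ y ↔ u ≤ v)

theorem StrictMono.monotonePInj_some_comp {α β : Type*} [LinearOrder α] [Preorder β]
    {f : α → β} (hf : StrictMono f) : MonotonePInj (some ∘ f) := by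
  rintro x y _ _ ⟨⟩ ⟨⟩
  exact hf.le_iff_le.symm

theorem MonotonePInj.pcomp {f g : ℕ → Option ℕ} (hf : MonotonePInj f) (hg : MonotonePInj g) :
    MonotonePInj (pcomp f g) := by
  intro x y u v hx hy
  obtain ⟨x', hxx', hx'u⟩ := Option.bind_eq_some_iff.mp hx
  obtain ⟨y', hyy', hy'v⟩ := Option.bind_eq_some_iff.mp hy
  exact (hg x y x' y' hxx' hyy').trans (hf x' y' u v hx'u hy'v)

theorem Nat.le_iff_div_le_div_of_mod_eq {x y a : ℕ} (h : x % a = y % a) :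
    x ≤ y ↔ x / a ≤ y / a := by
  rcases Nat.eq_zero_or_pos a with rfl | ha
  · simp_all
  · conv_lhs => rw [← Nat.div_add_mod x a, ← Nat.div_add_mod y a, h]
    rw [Nat.add_le_add_iff_right, Nat.mul_le_mul_left_iff ha]

theorem monotonePInj_Rdag {a : ℕ} (ha : 0 < a) (b : ℕ) : MonotonePInj (Rdag a b) :=
  ((strictMono_mul_left_of_pos ha).add_const b).monotonePInj_some_comp

theorem Rgen_eq_some_iff {a b n u : ℕ} : Rgen a b n = some u ↔ n % a = b ∧ u = n / a := by
  simp only [Rgen, Option.ite_none_right_eq_some, Option.some_inj]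
  refine and_congr_right fun hmod => ?_
  rw [← hmod, ← Nat.div_eq_sub_mod_div, eq_comm]

theorem monotonePInj_Rgen (a b : ℕ) : MonotonePInj (Rgen a b) := by
  intro x y u v hx hy
  obtain ⟨hxb, rfl⟩ := Rgen_eq_some_iff.mp hx
  obtain ⟨hyb, rfl⟩ := Rgen_eq_some_iff.mp hy
  exact Nat.le_iff_div_le_div_of_mod_eq (hxb.trans hyb.symm)

/-- Any composite of the generators `R_{a,b}` and their generalised inverses is monotone. -/
theorem composites_monotone (L : List (ℕ × ℕ × Bool)) (hL : ∀ g ∈ L, g.2.1 < g.1)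
    (F : ℕ → Option ℕ)
    (hF : F = L.foldr
      (fun g f => pcomp (if g.2.2 then Rdag g.1 g.2.1 else Rgen g.1 g.2.1) f)
      (fun n => some n)) :
    ∀ x y u v : ℕ, F x = some u → F y = some v → (x ≤ y ↔ u ≤ v) := by
  subst hF
  induction L with
  | nil => exact strictMono_id.monotonePInj_some_comp
  | cons g L ih =>
    have hgen : MonotonePInj (if g.2.2 then Rdag g.1 g.2.1 else Rgen g.1 g.2.1) := by
      split
      · exact monotonePInj_Rdag (g.2.1.zero_le.trans_lt (hL g List.mem_cons_self)) _
      · exact monotonePInj_Rgen _ _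
    exact hgen.pcomp (ih fun g' hg' => hL g' (List.mem_cons_of_mem _ hg'))
end

section
/- For n, p in ℕ⁺, the partial identity on nℕ composed with the partial identity on pℕ equals the partial identity on lcm(n,p)ℕ, and consequently the assignment [m,n] ↦ ×_m ∘ ×_n^‡ from Leech's monoid L (with composition (m,n)(p,q) = (mp/gcd(n,p), nq/gcd(n,p))) to partial injections on ℕ is multiplicative: ×_m ×_n^‡ ∘ ×_p ×_q^‡ = ×_{mp/gcd(n,p)} ×_{nq/gcd(n,p)}^‡. -/
/-- Curried multiplication `×_m`. -/
def pmul (m : ℕ) : ℕ → Option ℕ := fun x => some (x * m)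

/-- Whole-number division `×_n^‡`, defined on `nℕ`. -/
def pmulDag (n : ℕ) : ℕ → Option ℕ := fun x => if n ∣ x then some (x / n) else none

/-- Partial identity on `mℕ`. -/
def idMul (m : ℕ) : ℕ → Option ℕ := fun x => if m ∣ x then some x else none

theorem pcomp_assoc (f g h : ℕ → Option ℕ) : pcomp (pcomp f g) h = pcomp f (pcomp g h) := by
  funext x
  exact (Option.bind_assoc (h x) g f).symm

theorem idMul_pcomp_idMul (n p : ℕ) : pcomp (idMul n) (idMul p) = idMul (Nat.lcm n p) := by
  funext x
  by_cases hp : p ∣ x <;> by_cases hn : n ∣ x <;> simp [pcomp, idMul, Nat.lcm_dvd_iff, hp, hn]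

theorem pmul_pcomp_pmul (a b : ℕ) : pcomp (pmul a) (pmul b) = pmul (a * b) := by
  funext x
  simp only [pcomp, pmul, Option.bind_some, Nat.mul_left_comm, Nat.mul_comm]

theorem pmulDag_pcomp_pmulDag (a b : ℕ) : pcomp (pmulDag a) (pmulDag b) = pmulDag (a * b) := by
  funext x
  by_cases hb : b ∣ x
  · simp [pcomp, pmulDag, hb, Nat.dvd_div_iff_mul_dvd hb, Nat.div_div_eq_div_mul, Nat.mul_comm a b]
  · have hab : ¬ a * b ∣ x := fun h => hb (dvd_trans (dvd_mul_left b a) h)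
    simp [pcomp, pmulDag, hb, hab]

theorem pmulDag_mul_pcomp_pmul_mul {g : ℕ} (hg : 0 < g) (a b : ℕ) :
    pcomp (pmulDag (a * g)) (pmul (b * g)) = pcomp (pmulDag a) (pmul b) := by
  funext x
  simp only [pcomp, pmul, pmulDag, Option.bind_some, ← Nat.mul_assoc,
    Nat.mul_dvd_mul_iff_right hg, Nat.mul_div_mul_right _ _ hg]

theorem Nat.Coprime.pmulDag_pcomp_pmul {a b : ℕ} (h : Nat.Coprime a b) :
    pcomp (pmulDag a) (pmul b) = pcomp (pmul b) (pmulDag a) := by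
  funext x
  by_cases ha : a ∣ x
  · simp [pcomp, pmul, pmulDag, h.dvd_mul_right, ha, Nat.div_mul_right_comm ha]
  · simp [pcomp, pmul, pmulDag, h.dvd_mul_right, ha]

theorem pmulDag_pcomp_pmul {n p : ℕ} (h : 0 < Nat.gcd n p) :
    pcomp (pmulDag n) (pmul p) = pcomp (pmul (p / Nat.gcd n p)) (pmulDag (n / Nat.gcd n p)) :=
  calc pcomp (pmulDag n) (pmul p)
      = pcomp (pmulDag (n / Nat.gcd n p * Nat.gcd n p)) (pmul (p / Nat.gcd n p * Nat.gcd n p)) := by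
        rw [Nat.div_mul_cancel (Nat.gcd_dvd_left n p), Nat.div_mul_cancel (Nat.gcd_dvd_right n p)]
    _ = pcomp (pmulDag (n / Nat.gcd n p)) (pmul (p / Nat.gcd n p)) := pmulDag_mul_pcomp_pmul_mul h _ _
    _ = _ := (Nat.coprime_div_gcd_div_gcd h).pmulDag_pcomp_pmul

theorem leech_embedding_multiplicative_general (n p : ℕ) (hp : 0 < p) :
    (pcomp (idMul n) (idMul p) = idMul (Nat.lcm n p)) ∧
    (∀ m q : ℕ, 0 < m → 0 < q →
      pcomp (pcomp (pmul m) (pmulDag n)) (pcomp (pmul p) (pmulDag q))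
        = pcomp (pmul (m * p / Nat.gcd n p)) (pmulDag (n * q / Nat.gcd n p))) := by
  refine ⟨idMul_pcomp_idMul n p, fun m q _ _ => ?_⟩
  rw [pcomp_assoc, ← pcomp_assoc (pmulDag n), pmulDag_pcomp_pmul (Nat.gcd_pos_of_pos_right n hp),
    pcomp_assoc, pmulDag_pcomp_pmulDag, ← pcomp_assoc, pmul_pcomp_pmul,
    Nat.mul_div_assoc _ (Nat.gcd_dvd_right n p), Nat.div_mul_right_comm (Nat.gcd_dvd_left n p)]

theorem leech_embedding_multiplicative (n p : ℕ) (hn : 0 < n) (hp : 0 < p) :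
    (pcomp (idMul n) (idMul p) = idMul (Nat.lcm n p)) ∧
    (∀ m q : ℕ, 0 < m → 0 < q →
      pcomp (pcomp (pmul m) (pmulDag n)) (pcomp (pmul p) (pmulDag q))
        = pcomp (pmul (m * p / Nat.gcd n p)) (pmulDag (n * q / Nat.gcd n p))) :=
  leech_embedding_multiplicative_general n p hp
end
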